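/- arXiv:math/0103184 — 2 statements merged into one kernel-verified Lean document; each statement's English description precedes it below -/
import Mathlib

section
/- Let η ∈ ℂ with η ≠ 1. Define functions Aₙ, Bₙ on ℂ \ {s : s² = η} recursively by A₀(s) = s/(s² − η), B₀(s) = 1/(s² − η), Aₙ₊₁(s) = (−1/(s² − η))·Aₙ′(s), Bₙ₊₁(s) = (−1/(s² − η))·Bₙ′(s). Then −A₃(−1) = 4(2η² + 21η + 7)/(η − 1)⁷ and −B₃(−1) = −40(η + 2)/(η − 1)⁷. -/
/-!
The recursion `Xₙ₊₁ = -(s² - η)⁻¹ Xₙ'` maps a kernel `p(s) / (s² - η)ᵏ` with polynomial numerator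
`p` to `(2ksp - (s² - η)p') / (s² - η)ᵏ⁺²`. Starting from `A₀ = s / (s² - η)` and
`B₀ = 1 / (s² - η)`, the third kernels are therefore polynomials divided by `(s² - η)⁷`, and at
`s = -1` the denominator is `(1 - η)⁷`, which is nonzero because `η ≠ 1`.
-/

open Polynomial

section Kernel

variable {𝕜 : Type*} [NontriviallyNormedField 𝕜]

theorem isOpen_setOf_sq_sub_ne (η : 𝕜) : IsOpen {s : 𝕜 | s ^ 2 - η ≠ 0} :=
  isOpen_ne.preimage (by fun_prop)

noncomputable def kernelStep (η : 𝕜) (k : ℕ) (p : 𝕜[X]) : 𝕜[X] :=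
  C (2 * k : 𝕜) * X * p - derivative p * (X ^ 2 - C η)

theorem neg_inv_mul_deriv_of_eq_div_pow {η : 𝕜} {f : 𝕜 → 𝕜} {p : 𝕜[X]} {k : ℕ}
    (hf : ∀ s, s ^ 2 - η ≠ 0 → f s = p.eval s / (s ^ 2 - η) ^ k) {s : 𝕜}
    (hs : s ^ 2 - η ≠ 0) :
    -(s ^ 2 - η)⁻¹ * deriv f s = (kernelStep η k p).eval s / (s ^ 2 - η) ^ (k + 2) := by
  have hf_nhds : f =ᶠ[nhds s] fun t => p.eval t / (t ^ 2 - η) ^ k :=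
    Filter.eventuallyEq_of_mem ((isOpen_setOf_sq_sub_ne η).mem_nhds hs) hf
  have hq : HasDerivAt (fun t => (t ^ 2 - η) ^ k) (k * (s ^ 2 - η) ^ (k - 1) * (2 * s)) s := by
    simpa using ((hasDerivAt_pow 2 s).sub_const η).fun_pow k
  rw [hf_nhds.deriv_eq, ((Polynomial.hasDerivAt p s).fun_div hq (pow_ne_zero k hs)).deriv]
  simp only [kernelStep, eval_sub, eval_mul, eval_C, eval_X, eval_pow]
  rcases k with _ | k
  · push_cast
    field_simp
    ring
  · field_simp
    push_cast [add_tsub_cancel_right]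
    ring

noncomputable def kernelNumerator (η : 𝕜) (p₀ : 𝕜[X]) : ℕ → 𝕜[X]
  | 0 => p₀
  | n + 1 => kernelStep η (2 * n + 1) (kernelNumerator η p₀ n)

theorem eq_kernelNumerator_div {η : 𝕜} {p₀ : 𝕜[X]} {K : ℕ → 𝕜 → 𝕜}
    (h0 : ∀ s, s ^ 2 - η ≠ 0 → K 0 s = p₀.eval s / (s ^ 2 - η))
    (hsucc : ∀ n s, K (n + 1) s = -(s ^ 2 - η)⁻¹ * deriv (K n) s) (n : ℕ) {s : 𝕜}
    (hs : s ^ 2 - η ≠ 0) :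
    K n s = (kernelNumerator η p₀ n).eval s / (s ^ 2 - η) ^ (2 * n + 1) := by
  induction n generalizing s with
  | zero => simpa [kernelNumerator] using h0 s hs
  | succ n ih => rw [hsucc, neg_inv_mul_deriv_of_eq_div_pow (fun t ht => ih ht) hs]; rfl

end Kernel

theorem eval_neg_one_kernelNumerator_X_three (η : ℂ) :
    (kernelNumerator η X 3).eval (-1) = 8 * η ^ 2 + 84 * η + 28 := by
  simp [kernelNumerator, kernelStep]
  ring

theorem eval_neg_one_kernelNumerator_one_three (η : ℂ) :
    (kernelNumerator η 1 3).eval (-1) = -(40 * η + 80) := by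
  simp [kernelNumerator, kernelStep]
  ring

/-- Closed forms `α₃ = 4(2η²+21η+7)/(η−1)⁷` and `β₃ = −40(η+2)/(η−1)⁷` for the example
`f₀(t) = 1/(t+1)`, where `αₙ = −Aₙ(−1)` and `βₙ = −Bₙ(−1)`. -/
theorem example_coefficients_n3
    (η : ℂ) (hη : η ≠ 1)
    (A B : ℕ → ℂ → ℂ)
    (hA0 : ∀ s : ℂ, A 0 s = s / (s ^ 2 - η))
    (hB0 : ∀ s : ℂ, B 0 s = 1 / (s ^ 2 - η))
    (hAsucc : ∀ n, ∀ s : ℂ, A (n + 1) s = (-(s ^ 2 - η)⁻¹) * deriv (A n) s)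
    (hBsucc : ∀ n, ∀ s : ℂ, B (n + 1) s = (-(s ^ 2 - η)⁻¹) * deriv (B n) s) :
    -A 3 (-1) = 4 * (2 * η ^ 2 + 21 * η + 7) / (η - 1) ^ 7 ∧
    -B 3 (-1) = -(40 * (η + 2) / (η - 1) ^ 7) := by
  have hη' : η - 1 ≠ 0 := sub_ne_zero.mpr hη
  have hs : (-1 : ℂ) ^ 2 - η ≠ 0 := by
    rw [neg_one_sq, ← neg_sub]
    exact neg_ne_zero.mpr hη'
  have hA3 := eq_kernelNumerator_div (p₀ := X) (fun s _ => by rw [hA0, eval_X]) hAsucc 3 hs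
  have hB3 := eq_kernelNumerator_div (p₀ := 1) (fun s _ => by rw [hB0, eval_one]) hBsucc 3 hs
  rw [eval_neg_one_kernelNumerator_X_three] at hA3
  rw [eval_neg_one_kernelNumerator_one_three] at hB3
  rw [hA3, hB3, neg_one_sq, ← neg_sub η 1]
  constructor <;> field_simp <;> ring
end

section
/- Let θ, b ∈ ℝ with θ > 0 and b > 0, and set t = cosh θ. (i) Suppose s is a complex-analytic function on an open neighborhood of b with s(b) = e^{θ}, s′(b) a positive real number, and (s(w)² − 2t·s(w) + 1)·s′(w) = s(w)·(w² − b²) near b; then s′(b)/√(s(b)) = √(b/sinh θ). (ii) Suppose σ is a complex-analytic function on an open neighborhood of −b with σ(−b) = e^{−θ}, σ′(−b) a positive real number, and (σ(w)² − 2t·σ(w) + 1)·σ′(w) = σ(w)·(w² − b²) near −b; then σ′(−b)/√(σ(−b)) = √(b/sinh θ). In particular the two values coincide. -/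
open Complex Filter Topology

/-! At a saddle `w₀` the coefficient `s² - 2ts + 1` of `s'` in the differential equation vanishes,
so differentiating the equation once kills the `s''` term and leaves
`(2s(w₀) - 2t) s'(w₀)² = 2w₀ s(w₀)`. With `s(w₀) = e^{±θ}` and `t = cosh θ` the left factor is
`±2 sinh θ`, so `s'(w₀)² / s(w₀) = b / sinh θ` at both saddles `w₀ = ±b`, and positivity of
`s'(w₀)` selects the positive square root. -/

theorem HasDerivAt.mul_of_left_eq_zero {𝕜 : Type*} [NontriviallyNormedField 𝕜] {f g : 𝕜 → 𝕜}
    {f' x : 𝕜} (hf : HasDerivAt f f' x) (hg : DifferentiableAt 𝕜 g x) (hfx : f x = 0) :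
    HasDerivAt (fun y => f y * g y) (f' * g x) x := by
  have h := hf.mul hg.hasDerivAt
  rwa [hfx, zero_mul, add_zero] at h

theorem deriv_sq_of_ode_at_saddle {s : ℂ → ℂ} {t w₀ : ℂ} (hs : AnalyticAt ℂ s w₀)
    (hode : ∀ᶠ w in 𝓝 w₀,
      (s w ^ 2 - 2 * t * s w + 1) * deriv s w = s w * (w ^ 2 - w₀ ^ 2))
    (hzero : s w₀ ^ 2 - 2 * t * s w₀ + 1 = 0) :
    (2 * s w₀ - 2 * t) * deriv s w₀ ^ 2 = 2 * w₀ * s w₀ := by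
  have hs' : HasDerivAt s (deriv s w₀) w₀ := hs.differentiableAt.hasDerivAt
  have hcoeff : HasDerivAt (fun w => s w ^ 2 - 2 * t * s w + 1)
      ((2 * s w₀ - 2 * t) * deriv s w₀) w₀ := by
    refine (((hs'.pow 2).sub (hs'.const_mul (2 * t))).add_const 1).congr_deriv ?_
    ring
  have hlhs := (hcoeff.mul_of_left_eq_zero hs.deriv.differentiableAt hzero).congr_of_eventuallyEq
    (hode.mono fun _ h => h.symm)
  have hrhs : HasDerivAt (fun w => s w * (w ^ 2 - w₀ ^ 2)) (2 * w₀ * s w₀) w₀ := by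
    refine (hs'.mul ((hasDerivAt_pow 2 w₀).sub_const (w₀ ^ 2))).congr_deriv ?_
    ring
  linear_combination -(hrhs.unique hlhs)

theorem Real.exp_sq_sub_two_mul_cosh_mul_exp_add_one (x : ℝ) :
    Real.exp x ^ 2 - 2 * Real.cosh x * Real.exp x + 1 = 0 := by
  rw [← Real.cosh_add_sinh]
  linear_combination -Real.cosh_sq x

theorem div_sqrt_exp_eq_sqrt_div_sinh {θ w c : ℝ} (hθ : θ ≠ 0) (hc : 0 ≤ c)
    (h : 2 * Real.sinh θ * c ^ 2 = 2 * w * Real.exp θ) :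
    c / √(Real.exp θ) = √(w / Real.sinh θ) := by
  have hsinh : Real.sinh θ ≠ 0 := Real.sinh_ne_zero.mpr hθ
  rw [← Real.sqrt_sq hc, ← Real.sqrt_div' _ (Real.exp_pos θ).le]
  congr 1
  rw [div_eq_div_iff (Real.exp_pos θ).ne' hsinh]
  linear_combination h / 2

theorem deriv_div_sqrt_eq_sqrt_div_sinh {θ w₀ c : ℝ} (hθ : θ ≠ 0) (hc : 0 ≤ c) {s : ℂ → ℂ}
    (hs : AnalyticAt ℂ s w₀) (hsw₀ : s w₀ = Real.exp θ) (hderiv : deriv s w₀ = c)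
    (hode : ∀ᶠ w in 𝓝 (w₀ : ℂ),
      (s w ^ 2 - 2 * (Real.cosh θ : ℂ) * s w + 1) * deriv s w = s w * (w ^ 2 - (w₀ : ℂ) ^ 2)) :
    deriv s w₀ / ((√(Real.exp θ) : ℝ) : ℂ) = ((√(w₀ / Real.sinh θ) : ℝ) : ℂ) := by
  have hzero : s w₀ ^ 2 - 2 * (Real.cosh θ : ℂ) * s w₀ + 1 = 0 := by
    rw [hsw₀]
    exact_mod_cast Real.exp_sq_sub_two_mul_cosh_mul_exp_add_one θ
  have key := deriv_sq_of_ode_at_saddle hs hode hzero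
  rw [hsw₀, hderiv] at key
  have hc2 : 2 * Real.sinh θ * c ^ 2 = 2 * w₀ * Real.exp θ := by
    have h : ((2 * Real.sinh θ * c ^ 2 : ℝ) : ℂ) = ((2 * w₀ * Real.exp θ : ℝ) : ℂ) := by
      rw [← Real.exp_sub_cosh]
      push_cast at key ⊢
      linear_combination key
    exact_mod_cast h
  rw [hderiv, ← div_sqrt_exp_eq_sqrt_div_sinh hθ hc hc2, ofReal_div]

theorem leading_coefficients_coincide_general
    (θ b : ℝ) (hθ : 0 < θ)
    (t : ℝ) (ht : t = Real.cosh θ)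
    (U : Set ℂ) (hU : IsOpen U) (hbU : (b : ℂ) ∈ U)
    (s : ℂ → ℂ) (hs : DifferentiableOn ℂ s U)
    (hsb : s (b : ℂ) = (Real.exp θ : ℂ))
    (hs'pos : ∃ c : ℝ, 0 < c ∧ deriv s (b : ℂ) = (c : ℂ))
    (hode : ∀ w ∈ U,
      (s w ^ 2 - 2 * (t : ℂ) * s w + 1) * deriv s w = s w * (w ^ 2 - (b : ℂ) ^ 2))
    (V : Set ℂ) (hV : IsOpen V) (hbV : -(b : ℂ) ∈ V)
    (σ : ℂ → ℂ) (hσ : DifferentiableOn ℂ σ V)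
    (hσb : σ (-(b : ℂ)) = (Real.exp (-θ) : ℂ))
    (hσ'pos : ∃ c : ℝ, 0 < c ∧ deriv σ (-(b : ℂ)) = (c : ℂ))
    (hode' : ∀ w ∈ V,
      (σ w ^ 2 - 2 * (t : ℂ) * σ w + 1) * deriv σ w = σ w * (w ^ 2 - (b : ℂ) ^ 2)) :
    deriv s (b : ℂ) / ((Real.sqrt (Real.exp θ) : ℝ) : ℂ) =
      ((Real.sqrt (b / Real.sinh θ) : ℝ) : ℂ) ∧
    deriv σ (-(b : ℂ)) / ((Real.sqrt (Real.exp (-θ)) : ℝ) : ℂ) =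
      ((Real.sqrt (b / Real.sinh θ) : ℝ) : ℂ) ∧
    deriv s (b : ℂ) / ((Real.sqrt (Real.exp θ) : ℝ) : ℂ) =
      deriv σ (-(b : ℂ)) / ((Real.sqrt (Real.exp (-θ)) : ℝ) : ℂ) := by
  subst ht
  obtain ⟨c, hc, hcs⟩ := hs'pos
  obtain ⟨c', hc', hcσ⟩ := hσ'pos
  have h₁ := deriv_div_sqrt_eq_sqrt_div_sinh hθ.ne' hc.le (hs.analyticAt (hU.mem_nhds hbU))
    hsb hcs (eventually_of_mem (hU.mem_nhds hbU) hode)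
  -- The second saddle is the first one for the parameters `(-θ, -b)`.
  have h₂ := deriv_div_sqrt_eq_sqrt_div_sinh (w₀ := -b) (neg_ne_zero.mpr hθ.ne') hc'.le
    (by simpa using hσ.analyticAt (hV.mem_nhds hbV)) (by simpa using hσb) (by simpa using hcσ)
    (by simpa using eventually_of_mem (hV.mem_nhds hbV) hode')
  rw [Real.sinh_neg, neg_div_neg_eq] at h₂
  push_cast at h₂
  exact ⟨h₁, h₂, h₁.trans h₂.symm⟩

/-- The leading coefficients `p₀^{(1)} = s′(b)/√(s(b))` and `p₀^{(2)} = σ′(−b)/√(σ(−b))`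
of the integrand factor `f(w) = (1/√s)·ds/dw` at the two saddle points both equal
`√(b/sinh θ)`; in particular they coincide. -/
theorem leading_coefficients_coincide
    (θ b : ℝ) (hθ : 0 < θ) (hb : 0 < b)
    (t : ℝ) (ht : t = Real.cosh θ)
    (U : Set ℂ) (hU : IsOpen U) (hbU : (b : ℂ) ∈ U)
    (s : ℂ → ℂ) (hs : DifferentiableOn ℂ s U)
    (hsb : s (b : ℂ) = (Real.exp θ : ℂ))
    (hs'pos : ∃ c : ℝ, 0 < c ∧ deriv s (b : ℂ) = (c : ℂ))
    (hode : ∀ w ∈ U,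
      (s w ^ 2 - 2 * (t : ℂ) * s w + 1) * deriv s w = s w * (w ^ 2 - (b : ℂ) ^ 2))
    (V : Set ℂ) (hV : IsOpen V) (hbV : -(b : ℂ) ∈ V)
    (σ : ℂ → ℂ) (hσ : DifferentiableOn ℂ σ V)
    (hσb : σ (-(b : ℂ)) = (Real.exp (-θ) : ℂ))
    (hσ'pos : ∃ c : ℝ, 0 < c ∧ deriv σ (-(b : ℂ)) = (c : ℂ))
    (hode' : ∀ w ∈ V,
      (σ w ^ 2 - 2 * (t : ℂ) * σ w + 1) * deriv σ w = σ w * (w ^ 2 - (b : ℂ) ^ 2)) :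
    deriv s (b : ℂ) / ((Real.sqrt (Real.exp θ) : ℝ) : ℂ) =
      ((Real.sqrt (b / Real.sinh θ) : ℝ) : ℂ) ∧
    deriv σ (-(b : ℂ)) / ((Real.sqrt (Real.exp (-θ)) : ℝ) : ℂ) =
      ((Real.sqrt (b / Real.sinh θ) : ℝ) : ℂ) ∧
    deriv s (b : ℂ) / ((Real.sqrt (Real.exp θ) : ℝ) : ℂ) =
      deriv σ (-(b : ℂ)) / ((Real.sqrt (Real.exp (-θ)) : ℝ) : ℂ) :=
  leading_coefficients_coincide_general θ b hθ t ht U hU hbU s hs hsb hs'pos hode V hV hbV σ hσ hσb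
    hσ'pos hode'
end
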